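/- Let H_pen = Σ_{b=1}^n (g_x^{(b)} X₁^{(b)}X₂^{(b)} + g_z^{(b)} Z₁^{(b)}Z₂^{(b)} + g_x^{(b)} X₃^{(b)}X₄^{(b)} + g_z^{(b)} Z₃^{(b)}Z₄^{(b)}) on 4n qubits, with all g_x^{(b)}, g_z^{(b)} nonzero and |g_x^{(b)}| ≠ |g_z^{(b)}|. Let P₀ be the projector onto the zero-eigenspace of H_pen. Then for every single-qubit Pauli operator V, P₀ V P₀ = 0. -/

import Mathlib

open Matrix Kronecker

noncomputable section

def PauliX : Matrix (Fin 2) (Fin 2) ℂ := !![0, 1; 1, 0]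
def PauliY : Matrix (Fin 2) (Fin 2) ℂ := !![0, -Complex.I; Complex.I, 0]
def PauliZ : Matrix (Fin 2) (Fin 2) ℂ := !![1, 0; 0, -1]

/-- The single-qubit operator `A` acting on qubit `i` of a register of qubits
indexed by `ι` (identity on all other qubits). -/
def pauliAt {ι : Type*} [Fintype ι] [DecidableEq ι] (A : Matrix (Fin 2) (Fin 2) ℂ)
    (i : ι) : Matrix (ι → Fin 2) (ι → Fin 2) ℂ :=
  fun f g => A (f i) (g i) * ∏ j ∈ Finset.univ.erase i, (if f j = g j then 1 else 0)

/-- The block penalty Hamiltonian on `n` blocks of 4 qubits: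
`H_pen = Σ_b (g_x⁽ᵇ⁾ X₁⁽ᵇ⁾X₂⁽ᵇ⁾ + g_z⁽ᵇ⁾ Z₁⁽ᵇ⁾Z₂⁽ᵇ⁾ + g_x⁽ᵇ⁾ X₃⁽ᵇ⁾X₄⁽ᵇ⁾ + g_z⁽ᵇ⁾ Z₃⁽ᵇ⁾Z₄⁽ᵇ⁾)`. -/
def HpenBlocks (n : ℕ) (gx gz : Fin n → ℝ) :
    Matrix (Fin n × Fin 4 → Fin 2) (Fin n × Fin 4 → Fin 2) ℂ :=
  ∑ b : Fin n,
    ((gx b : ℂ) • (pauliAt PauliX (b, (0 : Fin 4)) * pauliAt PauliX (b, (1 : Fin 4))) +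
     (gz b : ℂ) • (pauliAt PauliZ (b, (0 : Fin 4)) * pauliAt PauliZ (b, (1 : Fin 4))) +
     (gx b : ℂ) • (pauliAt PauliX (b, (2 : Fin 4)) * pauliAt PauliX (b, (3 : Fin 4))) +
     (gz b : ℂ) • (pauliAt PauliZ (b, (2 : Fin 4)) * pauliAt PauliZ (b, (3 : Fin 4))))

/-! Let the Pauli `V` act on qubit `i`, and let `{p, q}` be the pair of its block containing
`i`, so that `H = g_x X_p X_q + g_z Z_p Z_q + R` with `R` acting trivially on `p` and `q`.
The operators `T₁ = X_p X_q` and `T₂ = Z_p Z_q` are commuting involutions commuting with `H`,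
and `V` commutes or anticommutes with each of them, so `H V = V H - V M` with
`M = a T₁ + b T₂`, where `(a, b)` is `(0, 2 g_z)`, `(2 g_x, 2 g_z)` or `(2 g_x, 0)` for
`V = X, Y, Z`. Sandwiching this between copies of `P₀` gives `P₀ V M P₀ = 0`. Finally
`(a T₁ + b T₂)(a T₁ - b T₂) = (a² - b²) 1` with `a² ≠ b²`, so `M` has an inverse commuting
with `H`; it preserves `ker H = range P₀`, whence `P₀ V P₀ = 0`. -/

section Algebra

variable {R A : Type*} [CommRing R] [Ring A] [Algebra R A]

lemma smul_add_smul_mul_smul_sub_smul {x y : A} (hx : x * x = 1) (hy : y * y = 1)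
    (hxy : Commute x y) (a b : R) :
    (a • x + b • y) * (a • x - b • y) = (a ^ 2 - b ^ 2) • 1 := by
  simp only [add_mul, mul_sub, smul_mul_smul, hx, hy, hxy.eq, sub_smul]
  module

lemma smul_add_smul_add_mul_eq_mul_sub {x y z v : A} {a b ε₁ ε₂ : R} (hz : Commute z v)
    (hx : x * v = ε₁ • (v * x)) (hy : y * v = ε₂ • (v * y)) :
    (a • x + b • y + z) * v =
      v * (a • x + b • y + z) - v * ((a * (1 - ε₁)) • x + (b * (1 - ε₂)) • y) := by
  simp only [add_mul, mul_add, mul_sub, smul_mul_assoc, mul_smul_comm, hx, hy, hz.eq, sub_smul,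
    mul_smul, one_smul]
  abel

end Algebra

lemma mul_mul_eq_zero_of_mul_eq_mul_sub {A : Type*} [Ring A] {H P V M N : A}
    (hHP : H * P = 0) (hPH : P * H = 0) (hNP : P * (N * P) = N * P)
    (hHV : H * V = V * H - V * M) (hMN : M * N = 1) : P * V * P = 0 := by
  have hVM : P * (V * M) * P = 0 := by
    rw [show V * M = V * H - H * V by rw [hHV]; abel, mul_sub, sub_mul, ← mul_assoc P H,
      hPH, mul_assoc, mul_assoc, hHP]
    simp
  calc P * V * P = P * (V * M) * (N * P) := by
        simp only [mul_assoc]; rw [← mul_assoc M N, hMN, one_mul]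
    _ = P * (V * M) * P * (N * P) := by rw [mul_assoc (P * (V * M)) P, hNP]
    _ = 0 := by rw [hVM, zero_mul]

section Projection

variable {n α : Type*} [Fintype n] [CommRing α]

lemma Matrix.mul_eq_zero_of_mulVec_eq_self {H P : Matrix n n α} (hidem : P * P = P)
    (hker : ∀ v, P *ᵥ v = v → H *ᵥ v = 0) : H * P = 0 :=
  Matrix.ext_iff_mulVec.2 fun v => by
    rw [← Matrix.mulVec_mulVec, Matrix.zero_mulVec]
    exact hker _ (by rw [Matrix.mulVec_mulVec, hidem])

lemma Matrix.mul_eq_self_of_mul_eq_zero {H P B : Matrix n n α}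
    (hker : ∀ v, H *ᵥ v = 0 → P *ᵥ v = v) (hB : H * B = 0) : P * B = B :=
  Matrix.ext_iff_mulVec.2 fun v => by
    rw [← Matrix.mulVec_mulVec]
    exact hker _ (by rw [Matrix.mulVec_mulVec, hB, Matrix.zero_mulVec])

end Projection

lemma kernelProj_mul_mul_kernelProj_eq_zero {n 𝕜 : Type*} [Fintype n] [DecidableEq n]
    [Field 𝕜] [StarRing 𝕜] {H P V T₁ T₂ : Matrix n n 𝕜} (hH : H.IsHermitian) (hP : P.IsHermitian)
    (hidem : P * P = P) (hker : ∀ v, H *ᵥ v = 0 ↔ P *ᵥ v = v)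
    (hT₁ : T₁ * T₁ = 1) (hT₂ : T₂ * T₂ = 1) (hT₁₂ : Commute T₁ T₂)
    (hT₁H : Commute T₁ H) (hT₂H : Commute T₂ H) {a b : 𝕜} (hab : a ^ 2 ≠ b ^ 2)
    (hHV : H * V = V * H - V * (a • T₁ + b • T₂)) : P * V * P = 0 := by
  have hHP : H * P = 0 := Matrix.mul_eq_zero_of_mulVec_eq_self hidem fun v => (hker v).2
  have hPH : P * H = 0 := by
    simpa [hH.eq, hP.eq] using congrArg Matrix.conjTranspose hHP
  set N := (a ^ 2 - b ^ 2)⁻¹ • (a • T₁ - b • T₂)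
  have hMN : (a • T₁ + b • T₂) * N = 1 := by
    rw [mul_smul_comm, smul_add_smul_mul_smul_sub_smul hT₁ hT₂ hT₁₂, smul_smul,
      inv_mul_cancel₀ (sub_ne_zero.2 hab), one_smul]
  have hNH : Commute N H := ((hT₁H.smul_left a).sub_left (hT₂H.smul_left b)).smul_left _
  refine mul_mul_eq_zero_of_mul_eq_mul_sub hHP hPH
    (Matrix.mul_eq_self_of_mul_eq_zero (fun v => (hker v).1) ?_) hHV hMN
  rw [← mul_assoc, ← hNH.eq, mul_assoc, hHP, mul_zero]

lemma PauliX_mul_self : PauliX * PauliX = 1 := by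
  ext i j; fin_cases i <;> fin_cases j <;> simp [PauliX, Matrix.mul_apply]

lemma PauliZ_mul_self : PauliZ * PauliZ = 1 := by
  ext i j; fin_cases i <;> fin_cases j <;> simp [PauliZ, Matrix.mul_apply]

lemma PauliX_mul_PauliZ : PauliX * PauliZ = (-1 : ℂ) • (PauliZ * PauliX) := by
  ext i j; fin_cases i <;> fin_cases j <;> simp [PauliX, PauliZ, Matrix.mul_apply]

lemma PauliZ_mul_PauliX : PauliZ * PauliX = (-1 : ℂ) • (PauliX * PauliZ) := by
  ext i j; fin_cases i <;> fin_cases j <;> simp [PauliX, PauliZ, Matrix.mul_apply]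

lemma PauliX_mul_PauliY : PauliX * PauliY = (-1 : ℂ) • (PauliY * PauliX) := by
  ext i j; fin_cases i <;> fin_cases j <;> simp [PauliX, PauliY, Matrix.mul_apply]

lemma PauliZ_mul_PauliY : PauliZ * PauliY = (-1 : ℂ) • (PauliY * PauliZ) := by
  ext i j; fin_cases i <;> fin_cases j <;> simp [PauliZ, PauliY, Matrix.mul_apply]

lemma isHermitian_PauliX : PauliX.IsHermitian := by
  ext i j; fin_cases i <;> fin_cases j <;> simp [PauliX]

lemma isHermitian_PauliZ : PauliZ.IsHermitian := by
  ext i j; fin_cases i <;> fin_cases j <;> simp [PauliZ]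

section PauliAt

variable {ι : Type*} [Fintype ι] [DecidableEq ι]

lemma pauliAt_apply (A : Matrix (Fin 2) (Fin 2) ℂ) (i : ι) (f g : ι → Fin 2) :
    pauliAt A i f g = if ∀ j ≠ i, f j = g j then A (f i) (g i) else 0 := by
  simp [pauliAt, Finset.prod_boole, Finset.mem_erase]

lemma pauliAt_mulVec_apply (A : Matrix (Fin 2) (Fin 2) ℂ) (i : ι) (v : (ι → Fin 2) → ℂ)
    (f : ι → Fin 2) :
    (pauliAt A i *ᵥ v) f = ∑ x, A (f i) x * v (Function.update f i x) := by
  have hterm : ∀ g, pauliAt A i f g * v g =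
      ∑ x, if Function.update f i x = g then A (f i) x * v g else 0 := by
    intro g
    simp only [Function.update_eq_iff, ite_and, Finset.sum_ite_eq', Finset.mem_univ, if_true,
      pauliAt_apply, ite_mul, zero_mul]
  simp only [Matrix.mulVec, dotProduct, hterm]
  rw [Finset.sum_comm]
  simp

lemma pauliAt_mul_pauliAt (A B : Matrix (Fin 2) (Fin 2) ℂ) (i : ι) :
    pauliAt A i * pauliAt B i = pauliAt (A * B) i := by
  refine Matrix.ext_iff_mulVec.2 fun v => funext fun f => ?_
  simp only [← Matrix.mulVec_mulVec, pauliAt_mulVec_apply, Function.update_self,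
    Function.update_idem, Matrix.mul_apply, Finset.mul_sum, Finset.sum_mul, mul_assoc]
  exact Finset.sum_comm

lemma commute_pauliAt {i j : ι} (hij : i ≠ j) (A B : Matrix (Fin 2) (Fin 2) ℂ) :
    Commute (pauliAt A i) (pauliAt B j) := by
  refine Matrix.ext_iff_mulVec.2 fun v => funext fun f => ?_
  simp only [← Matrix.mulVec_mulVec, pauliAt_mulVec_apply, Function.update_of_ne hij,
    Function.update_of_ne hij.symm, Function.update_comm hij, Finset.mul_sum]
  rw [Finset.sum_comm]
  simp only [mul_left_comm]

lemma pauliAt_one (i : ι) : pauliAt (1 : Matrix (Fin 2) (Fin 2) ℂ) i = 1 := by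
  refine Matrix.ext_iff_mulVec.2 fun v => funext fun f => ?_
  simp [pauliAt_mulVec_apply, Matrix.one_apply]

lemma pauliAt_smul (c : ℂ) (A : Matrix (Fin 2) (Fin 2) ℂ) (i : ι) :
    pauliAt (c • A) i = c • pauliAt A i := by
  ext f g
  simp [pauliAt, mul_assoc]

lemma Matrix.IsHermitian.pauliAt {A : Matrix (Fin 2) (Fin 2) ℂ} (hA : A.IsHermitian) (i : ι) :
    (pauliAt A i).IsHermitian := by
  ext f g
  simp only [Matrix.conjTranspose_apply, pauliAt_apply, eq_comm (a := g _)]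
  split_ifs <;> simp [hA.apply]

lemma commute_pauliAt_pauliAt (A : Matrix (Fin 2) (Fin 2) ℂ) (p q : ι) :
    Commute (pauliAt A p) (pauliAt A q) := by
  obtain rfl | hpq := eq_or_ne p q
  · exact Commute.refl _
  · exact commute_pauliAt hpq A A

lemma pauliAt_mul_pauliAt_eq_smul {A B : Matrix (Fin 2) (Fin 2) ℂ} {ε : ℂ}
    (h : B * A = ε • (A * B)) (i : ι) :
    pauliAt B i * pauliAt A i = ε • (pauliAt A i * pauliAt B i) := by
  rw [pauliAt_mul_pauliAt, h, pauliAt_smul, pauliAt_mul_pauliAt]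

lemma pauliAt_pair_mul_pauliAt {A B : Matrix (Fin 2) (Fin 2) ℂ} {ε : ℂ}
    (h : B * A = ε • (A * B)) {p q i : ι} (hpq : p ≠ q) (hi : i = p ∨ i = q) :
    pauliAt B p * pauliAt B q * pauliAt A i =
      ε • (pauliAt A i * (pauliAt B p * pauliAt B q)) := by
  rcases hi with rfl | rfl
  · rw [mul_assoc, (commute_pauliAt hpq.symm B A).eq, ← mul_assoc,
      pauliAt_mul_pauliAt_eq_smul h, smul_mul_assoc, mul_assoc]
  · rw [mul_assoc, pauliAt_mul_pauliAt_eq_smul h, mul_smul_comm, ← mul_assoc,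
      (commute_pauliAt hpq B A).eq, mul_assoc]

lemma pauliAt_pair_mul_self {B : Matrix (Fin 2) (Fin 2) ℂ} (hB : B * B = 1) (p q : ι) :
    pauliAt B p * pauliAt B q * (pauliAt B p * pauliAt B q) = 1 := by
  rw [(commute_pauliAt_pauliAt B q p).mul_mul_mul_comm, pauliAt_mul_pauliAt,
    pauliAt_mul_pauliAt, hB, pauliAt_one, pauliAt_one, one_mul]

lemma commute_pauliAt_pair_PauliX_PauliZ {p q : ι} (hpq : p ≠ q) :
    Commute (pauliAt PauliX p * pauliAt PauliX q) (pauliAt PauliZ p * pauliAt PauliZ q) := by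
  rw [commute_iff_eq, ← mul_assoc, pauliAt_pair_mul_pauliAt PauliX_mul_PauliZ hpq (.inl rfl),
    smul_mul_assoc, mul_assoc, pauliAt_pair_mul_pauliAt PauliX_mul_PauliZ hpq (.inr rfl),
    mul_smul_comm, smul_smul, ← mul_assoc]
  norm_num

/-- Operators acting as the identity on the qubits in `s`. -/
def supportedAwayFrom (s : Set ι) : Subalgebra ℂ (Matrix (ι → Fin 2) (ι → Fin 2) ℂ) :=
  Subalgebra.centralizer ℂ {M | ∃ A, ∃ i ∈ s, M = pauliAt A i}

lemma pauliAt_mem_supportedAwayFrom {s : Set ι} {j : ι} (hj : j ∉ s)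
    (B : Matrix (Fin 2) (Fin 2) ℂ) : pauliAt B j ∈ supportedAwayFrom s := by
  rintro _ ⟨A, i, hi, rfl⟩
  exact commute_pauliAt (ne_of_mem_of_not_mem hi hj) A B

lemma commute_pauliAt_of_mem_supportedAwayFrom {s : Set ι}
    {R : Matrix (ι → Fin 2) (ι → Fin 2) ℂ} (hR : R ∈ supportedAwayFrom s) {i : ι} (hi : i ∈ s)
    (A : Matrix (Fin 2) (Fin 2) ℂ) :
    Commute (pauliAt A i) R :=
  hR _ ⟨A, i, hi, rfl⟩

def pairPenalty (gx gz : ℝ) (p q : ι) : Matrix (ι → Fin 2) (ι → Fin 2) ℂ :=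
  (gx : ℂ) • (pauliAt PauliX p * pauliAt PauliX q) +
    (gz : ℂ) • (pauliAt PauliZ p * pauliAt PauliZ q)

lemma pairPenalty_mem_supportedAwayFrom (gx gz : ℝ) {s : Set ι} {p q : ι} (hp : p ∉ s)
    (hq : q ∉ s) : pairPenalty gx gz p q ∈ supportedAwayFrom s := by
  have hpair := fun B => mul_mem (pauliAt_mem_supportedAwayFrom hp B)
    (pauliAt_mem_supportedAwayFrom hq B)
  exact add_mem (Subalgebra.smul_mem _ (hpair PauliX) _)
    (Subalgebra.smul_mem _ (hpair PauliZ) _)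

lemma isHermitian_pairPenalty (gx gz : ℝ) (p q : ι) : (pairPenalty gx gz p q).IsHermitian := by
  have hpair : ∀ {B : Matrix (Fin 2) (Fin 2) ℂ}, B.IsHermitian →
      (pauliAt B p * pauliAt B q).IsHermitian := fun hB =>
    (IsSelfAdjoint.commute_iff (hB.pauliAt p) (hB.pauliAt q)).1 (commute_pauliAt_pauliAt _ p q)
  have hreal : ∀ g : ℝ, IsSelfAdjoint (g : ℂ) := fun g => Complex.conj_ofReal g
  exact ((hpair isHermitian_PauliX).smul (hreal gx)).add
    ((hpair isHermitian_PauliZ).smul (hreal gz))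

lemma exists_pauli_signs {A : Matrix (Fin 2) (Fin 2) ℂ}
    (hA : A = PauliX ∨ A = PauliY ∨ A = PauliZ) {gx gz : ℝ} (hgx : gx ≠ 0) (hgz : gz ≠ 0)
    (hne : |gx| ≠ |gz|) :
    ∃ ε₁ ε₂ : ℂ, PauliX * A = ε₁ • (A * PauliX) ∧ PauliZ * A = ε₂ • (A * PauliZ) ∧
      ((gx : ℂ) * (1 - ε₁)) ^ 2 ≠ ((gz : ℂ) * (1 - ε₂)) ^ 2 := by
  rcases hA with rfl | rfl | rfl
  · refine ⟨1, -1, by rw [one_smul], PauliZ_mul_PauliX, ?_⟩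
    norm_num [hgz, eq_comm (a := (0 : ℂ))]
  · refine ⟨-1, -1, PauliX_mul_PauliY, PauliZ_mul_PauliY, ?_⟩
    have : gx ^ 2 ≠ gz ^ 2 := fun h => hne (sq_eq_sq_iff_abs_eq_abs _ _ |>.1 h)
    norm_num [mul_pow]
    exact_mod_cast this
  · refine ⟨-1, 1, PauliX_mul_PauliZ, by rw [one_smul], ?_⟩
    norm_num [hgx, eq_comm (a := (0 : ℂ))]

lemma kernelProj_mul_pauliAt_mul_kernelProj_eq_zero {gx gz : ℝ} (hgx : gx ≠ 0) (hgz : gz ≠ 0)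
    (hne : |gx| ≠ |gz|) {p q i : ι} (hpq : p ≠ q) (hi : i = p ∨ i = q)
    {H R P : Matrix (ι → Fin 2) (ι → Fin 2) ℂ} (hR : R ∈ supportedAwayFrom {p, q})
    (hHR : H = pairPenalty gx gz p q + R) (hH : H.IsHermitian) (hP : P.IsHermitian)
    (hidem : P * P = P) (hker : ∀ v, H *ᵥ v = 0 ↔ P *ᵥ v = v) {A : Matrix (Fin 2) (Fin 2) ℂ}
    (hA : A = PauliX ∨ A = PauliY ∨ A = PauliZ) : P * pauliAt A i * P = 0 := by
  obtain ⟨ε₁, ε₂, hX, hZ, hab⟩ := exists_pauli_signs hA hgx hgz hne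
  have hpairR : ∀ B, Commute (pauliAt B p * pauliAt B q) R := fun B =>
    (commute_pauliAt_of_mem_supportedAwayFrom hR (by simp) B).mul_left
      (commute_pauliAt_of_mem_supportedAwayFrom hR (by simp) B)
  have hXZ := commute_pauliAt_pair_PauliX_PauliZ hpq
  refine kernelProj_mul_mul_kernelProj_eq_zero hH hP hidem hker
    (pauliAt_pair_mul_self PauliX_mul_self p q) (pauliAt_pair_mul_self PauliZ_mul_self p q) hXZ
    ?_ ?_ hab ?_
  · rw [hHR, pairPenalty]
    exact (((Commute.refl _).smul_right _).add_right (hXZ.smul_right _)).add_right (hpairR _)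
  · rw [hHR, pairPenalty]
    exact ((hXZ.symm.smul_right _).add_right ((Commute.refl _).smul_right _)).add_right
      (hpairR _)
  · rw [hHR, pairPenalty]
    exact smul_add_smul_add_mul_eq_mul_sub
      (commute_pauliAt_of_mem_supportedAwayFrom hR (by rcases hi with rfl | rfl <;> simp) A).symm
      (pauliAt_pair_mul_pauliAt hX hpq hi) (pauliAt_pair_mul_pauliAt hZ hpq hi)

end PauliAt

lemma HpenBlocks_eq_sum_pairPenalty (n : ℕ) (gx gz : Fin n → ℝ) :
    HpenBlocks n gx gz = ∑ b, (pairPenalty (gx b) (gz b) (b, 0) (b, 1) +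
      pairPenalty (gx b) (gz b) (b, 2) (b, 3)) := by
  simp only [HpenBlocks, pairPenalty, add_assoc]

lemma isHermitian_HpenBlocks (n : ℕ) (gx gz : Fin n → ℝ) :
    (HpenBlocks n gx gz).IsHermitian := by
  rw [HpenBlocks_eq_sum_pairPenalty]
  exact isSelfAdjoint_sum _ fun b _ =>
    (isHermitian_pairPenalty _ _ _ _).add (isHermitian_pairPenalty _ _ _ _)

lemma exists_HpenBlocks_eq_pairPenalty_add (n : ℕ) (gx gz : Fin n → ℝ) (b : Fin n)
    (k : Fin 4) :
    ∃ p q R, p ≠ q ∧ ((b, k) = p ∨ (b, k) = q) ∧ R ∈ supportedAwayFrom {p, q} ∧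
      HpenBlocks n gx gz = pairPenalty (gx b) (gz b) p q + R := by
  set pen := fun (c : Fin n) (x y : Fin 4) => pairPenalty (gx c) (gz c) (c, x) (c, y)
  set rest := ∑ c ∈ Finset.univ.erase b, (pen c 0 1 + pen c 2 3)
  have hsplit : HpenBlocks n gx gz = pen b 0 1 + pen b 2 3 + rest := by
    rw [HpenBlocks_eq_sum_pairPenalty, ← Finset.add_sum_erase _ _ (Finset.mem_univ b)]
  have hrest : ∀ x y : Fin 4, rest ∈ supportedAwayFrom {(b, x), (b, y)} := by
    intro x y
    refine Subalgebra.sum_mem _ fun c hc => ?_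
    have hcb : c ≠ b := Finset.ne_of_mem_erase hc
    exact add_mem (pairPenalty_mem_supportedAwayFrom _ _ (by simp [hcb]) (by simp [hcb]))
      (pairPenalty_mem_supportedAwayFrom _ _ (by simp [hcb]) (by simp [hcb]))
  have hk : (k = 0 ∨ k = 1) ∨ (k = 2 ∨ k = 3) := by fin_cases k <;> simp
  rcases hk with hk | hk
  · refine ⟨(b, 0), (b, 1), pen b 2 3 + rest, by simp, by simpa using hk,
      add_mem (pairPenalty_mem_supportedAwayFrom _ _ (by simp) (by simp)) (hrest 0 1), ?_⟩
    rw [hsplit, add_assoc]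
  · refine ⟨(b, 2), (b, 3), pen b 0 1 + rest, by simp, by simpa using hk,
      add_mem (pairPenalty_mem_supportedAwayFrom _ _ (by simp) (by simp)) (hrest 2 3), ?_⟩
    rw [hsplit, add_comm (pen b 0 1), add_assoc]

/-- The zero-eigenspace of the `[[4n,2n,2]]` block penalty Hamiltonian detects all
single-qubit Pauli errors: `P₀ V P₀ = 0` for every single-qubit Pauli operator `V`. -/
theorem block_code_detects_single_paulis (n : ℕ) (gx gz : Fin n → ℝ)
    (hgx : ∀ b, gx b ≠ 0) (hgz : ∀ b, gz b ≠ 0) (hne : ∀ b, |gx b| ≠ |gz b|)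
    (P₀ : Matrix (Fin n × Fin 4 → Fin 2) (Fin n × Fin 4 → Fin 2) ℂ)
    (hsa : P₀.IsHermitian) (hidem : P₀ * P₀ = P₀)
    (hker : ∀ v : (Fin n × Fin 4 → Fin 2) → ℂ,
      (HpenBlocks n gx gz).mulVec v = 0 ↔ P₀.mulVec v = v) :
    ∀ (i : Fin n × Fin 4) (A : Matrix (Fin 2) (Fin 2) ℂ),
      A = PauliX ∨ A = PauliY ∨ A = PauliZ →
      P₀ * pauliAt A i * P₀ = 0 := by
  rintro ⟨b, k⟩ A hA
  obtain ⟨p, q, R, hpq, hi, hR, hH⟩ := exists_HpenBlocks_eq_pairPenalty_add n gx gz b k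
  exact kernelProj_mul_pauliAt_mul_kernelProj_eq_zero (hgx b) (hgz b) (hne b) hpq hi hR hH
    (isHermitian_HpenBlocks n gx gz) hsa hidem hker hA

end
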